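/- arXiv:1910.14060 — 2 statements merged into one kernel-verified Lean document; each statement's English description precedes it below -/
import Mathlib

section
/- Let V and W be sheaves of rank r ≥ 1 on a smooth projective surface X containing a smooth rational curve E with E² = −1, such that V|_E ≅ O_E^{⊕r}. Let 0 ≤ d < r and n ∈ ℤ. If W fits in an exact sequence 0 → W(nE) → V((n+1)E) → O_E(−n−1)^{⊕d} → 0 or 0 → V((n−1)E) → W(nE) → O_E(−n)^{⊕d} → 0, then Δ(W) = Δ(V) + d(r−d)/(2r²). In particular Δ(W) ≤ Δ(V) + 1/8. -/
/-- Numerical data of a smooth projective surface: the rational Néron–Severi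
space `V` with its intersection pairing, the canonical class, and `χ(O_X)`. -/
structure NumSurface (V : Type*) [AddCommGroup V] [Module ℚ V] where
  inter : V →ₗ[ℚ] V →ₗ[ℚ] ℚ
  inter_symm : ∀ x y, inter x y = inter y x
  K : V
  chiO : ℚ

/-- The Chern character `(ch₀, ch₁, ch₂)` of a coherent sheaf. -/
structure CharQ (V : Type*) where
  r : ℚ
  c1 : V
  ch2 : ℚ

variable {V : Type*} [AddCommGroup V] [Module ℚ V]

instance : Add (CharQ V) := ⟨fun a b => ⟨a.r + b.r, a.c1 + b.c1, a.ch2 + b.ch2⟩⟩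
instance : Sub (CharQ V) := ⟨fun a b => ⟨a.r - b.r, a.c1 - b.c1, a.ch2 - b.ch2⟩⟩
instance : SMul ℚ (CharQ V) := ⟨fun q a => ⟨q * a.r, q • a.c1, q * a.ch2⟩⟩

namespace CharQ

/-- The total slope `ν = ch₁/ch₀`. -/
def nu (v : CharQ V) : V := v.r⁻¹ • v.c1

/-- The discriminant `Δ = ν²/2 − ch₂/ch₀`. -/
def Delta (S : NumSurface V) (v : CharQ V) : ℚ :=
  S.inter (nu v) (nu v) / 2 - v.ch2 / v.r

/-- The Chern character of the twist `G(A)` for a divisor class `A`: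
`ch(G)·e^A`. -/
def twist (S : NumSurface V) (v : CharQ V) (A : V) : CharQ V :=
  ⟨v.r, v.c1 + v.r • A, v.ch2 + S.inter v.c1 A + v.r * S.inter A A / 2⟩

/-- The Chern character of `i_* O_E(m)` for a (−1)-curve `E ⊂ X`:
`(0, E, m + 1/2)`; in particular `ch(O_E(−1)) = (0, E, −1/2)`, coming from
`0 → O → O(E) → O_E(−1) → 0`. -/
def OE (Ec : V) (m : ℤ) : CharQ V := ⟨0, Ec, (m : ℚ) + 1 / 2⟩

end CharQ

/-!
Both exact sequences determine `ch(W)` from `ch(V)`: comparing first Chern classes gives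
`c₁(W) = c₁(V) ± (r − d)E`, and comparing `ch₂`, where the twist parameter `n` cancels because
`E² = −1`, gives `ch₂(W) = ch₂(V) − (r − d)/2`.  Since `c₁(V)·E = 0`, moving `c₁` by `cE` changes
`ν²/2` by `−c²/(2r²)`, so `Δ(W) − Δ(V) = −(r − d)²/(2r²) + (r − d)/(2r) = d(r − d)/(2r²)`,
which is at most `1/8` because `4d(r − d) ≤ r²`.
-/

namespace CharQ

theorem delta_of_c1_eq_add_smul (S : NumSurface V) {v w : CharQ V} {E : V} {r c s : ℚ}
    (hr : r ≠ 0) (hv : v.r = r) (hw : w.r = r) (hc1 : w.c1 = v.c1 + c • E)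
    (hch2 : w.ch2 = v.ch2 + s) :
    Delta S w = Delta S v + c * S.inter v.c1 E / r ^ 2
      + c ^ 2 * S.inter E E / (2 * r ^ 2) - s / r := by
  simp only [Delta, nu, hv, hw, hc1, hch2, map_add, map_smul, LinearMap.add_apply,
    LinearMap.smul_apply, smul_eq_mul, S.inter_symm E v.c1]
  field_simp
  ring

/-- The case `0 → B(tE) → A((t+1)E) → O_E(−t−1)^{⊕d} → 0` of an elementary transformation. -/
theorem c1_ch2_of_twist_eq_twist_add_OE (S : NumSurface V) {a b : CharQ V} {E : V}
    {r d t : ℚ} {m : ℤ} (hE : S.inter E E = -1) (ha : a.r = r) (hb : b.r = r)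
    (hm : (m : ℚ) = -t - 1)
    (h : twist S a ((t + 1) • E) = twist S b (t • E) + d • OE E m) :
    b.c1 = a.c1 + (r - d) • E ∧ b.ch2 = a.ch2 + S.inter a.c1 E - (r - d) / 2 := by
  have hc1 : a.c1 + a.r • ((t + 1) • E) = b.c1 + b.r • (t • E) + d • E := congrArg c1 h
  have hch2 : a.ch2 + S.inter a.c1 ((t + 1) • E)
        + a.r * S.inter ((t + 1) • E) ((t + 1) • E) / 2
      = b.ch2 + S.inter b.c1 (t • E) + b.r * S.inter (t • E) (t • E) / 2
        + d * ((m : ℚ) + 1 / 2) := congrArg ch2 h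
  rw [ha, hb] at hc1 hch2
  have hbc1 : b.c1 = a.c1 + (r - d) • E := by
    linear_combination (norm := module) -hc1
  refine ⟨hbc1, ?_⟩
  simp only [hbc1, hm, map_add, map_smul, LinearMap.add_apply, LinearMap.smul_apply,
    smul_eq_mul, hE] at hch2
  linear_combination -hch2

end CharQ

open CharQ in
theorem discriminant_of_elementary_transformation_general
    (S : NumSurface V) (r d : ℕ) (hr : 1 ≤ r)
    (n : ℤ) (Ec : V) (hE : S.inter Ec Ec = -1)
    (Vch Wch : CharQ V) (hVr : Vch.r = r) (hWr : Wch.r = r)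
    (hVrestr : S.inter Vch.c1 Ec = 0)
    (hseq :
      twist S Vch (((n : ℚ) + 1) • Ec)
          = twist S Wch ((n : ℚ) • Ec) + (d : ℚ) • OE Ec (-n - 1) ∨
      twist S Wch ((n : ℚ) • Ec)
          = twist S Vch (((n : ℚ) - 1) • Ec) + (d : ℚ) • OE Ec (-n)) :
    Delta S Wch = Delta S Vch + (d * (r - d) : ℚ) / (2 * (r : ℚ) ^ 2) ∧
      Delta S Wch ≤ Delta S Vch + 1 / 8 := by
  have hrQ : (r : ℚ) ≠ 0 := by positivity
  obtain ⟨c, hc, hc1, hch2⟩ : ∃ c : ℚ, c ^ 2 = ((r : ℚ) - d) ^ 2 ∧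
      Wch.c1 = Vch.c1 + c • Ec ∧ Wch.ch2 = Vch.ch2 + -(((r : ℚ) - d) / 2) := by
    rcases hseq with h | h
    · obtain ⟨hc1, hch2⟩ := c1_ch2_of_twist_eq_twist_add_OE S hE hVr hWr (by push_cast; ring) h
      exact ⟨_, rfl, hc1, by rw [hch2, hVrestr]; ring⟩
    · obtain ⟨hc1, hch2⟩ := c1_ch2_of_twist_eq_twist_add_OE S hE hWr hVr
        (t := (n : ℚ) - 1) (m := -n) (by push_cast; ring) (by rwa [sub_add_cancel])
      have hWc1 : Wch.c1 = Vch.c1 + ((d : ℚ) - r) • Ec := by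
        rw [hc1]; module
      have hWE : S.inter Wch.c1 Ec = r - d := by
        simp [hWc1, hVrestr, hE]
      exact ⟨_, by ring, hWc1, by rw [hch2, hWE]; ring⟩
  have hmain : Delta S Wch = Delta S Vch + (d * (r - d) : ℚ) / (2 * (r : ℚ) ^ 2) := by
    rw [delta_of_c1_eq_add_smul S hrQ hVr hWr hc1 hch2, hVrestr, hE, hc]
    field_simp
    ring
  have hbound : (d * (r - d) : ℚ) / (2 * (r : ℚ) ^ 2) ≤ 1 / 8 := by
    rw [div_le_div_iff₀ (by positivity) (by norm_num)]
    nlinarith [sq_nonneg ((r : ℚ) - 2 * d)]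
  exact ⟨hmain, by linarith⟩

open CharQ in
/-- Let `V` and `W` be sheaves of rank `r ≥ 1` on a smooth projective surface
containing a smooth rational curve `E` with `E² = −1`, with `V|_E ≅ O_E^{⊕r}`
(numerically, `c₁(V).E = 0`).  Let `0 ≤ d < r` and `n ∈ ℤ`.  If `W` fits in
an exact sequence `0 → W(nE) → V((n+1)E) → O_E(−n−1)^{⊕d} → 0` or
`0 → V((n−1)E) → W(nE) → O_E(−n)^{⊕d} → 0` (so that the Chern characters
are additive along it), then `Δ(W) = Δ(V) + d(r−d)/(2r²)`.  In particular
`Δ(W) ≤ Δ(V) + 1/8`. -/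
theorem discriminant_of_elementary_transformation
    (S : NumSurface V) (r d : ℕ) (hr : 1 ≤ r) (hd0 : 0 ≤ d) (hdr : d < r)
    (n : ℤ) (Ec : V) (hE : S.inter Ec Ec = -1)
    (Vch Wch : CharQ V) (hVr : Vch.r = r) (hWr : Wch.r = r)
    (hVrestr : S.inter Vch.c1 Ec = 0)
    (hseq :
      twist S Vch (((n : ℚ) + 1) • Ec)
          = twist S Wch ((n : ℚ) • Ec) + (d : ℚ) • OE Ec (-n - 1) ∨
      twist S Wch ((n : ℚ) • Ec)
          = twist S Vch (((n : ℚ) - 1) • Ec) + (d : ℚ) • OE Ec (-n)) :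
    Delta S Wch = Delta S Vch + (d * (r - d) : ℚ) / (2 * (r : ℚ) ^ 2) ∧
      Delta S Wch ≤ Delta S Vch + 1 / 8 :=
  discriminant_of_elementary_transformation_general S r d hr n Ec hE Vch Wch hVr hWr hVrestr hseq
end

section
/- On the del Pezzo surface X_m (m ≤ 6, blowup of ℙ² at m general points), let v be a Chern character of positive rank with Δ(v) ≥ 1. Then v satisfies the Drézet–Le Potier condition: for every exceptional bundle E with r(E) < r(v) and μ(v) ≤ μ(E) ≤ μ(v) + K², one has χ(E, v) ≤ 0, and dually for the second DL inequality. Concretely, writing ν(v) − ν(E) = a(−K) + bD with D.(−K) = 0, one has −1 ≤ a ≤ 0, D² ≤ 0 by the Hodge index theorem, hence P(ν(v)−ν(E)) ≤ 1 ≤ Δ(E) + Δ(v), giving χ(E,v) ≤ 0. -/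
variable {V : Type*} [AddCommGroup V] [Module ℚ V]

namespace CharQ

/-- `P(ν) = χ(O_X) + ν.(ν − K_X)/2`. -/
def P (S : NumSurface V) (x : V) : ℚ := S.chiO + S.inter x (x - S.K) / 2

/-- The slope with respect to `−K_X`: `μ(G) = ν(G).(−K_X)`. -/
def mu (S : NumSurface V) (v : CharQ V) : ℚ := S.inter (nu v) (-S.K)

/-- The Euler pairing, via Riemann–Roch:
`χ(E, F) = r(E)r(F)(P(ν(F) − ν(E)) − Δ(E) − Δ(F))`. -/
def chiPair (S : NumSurface V) (v w : CharQ V) : ℚ :=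
  v.r * w.r * (P S (nu w - nu v) - Delta S v - Delta S w)

end CharQ

namespace NumSurface

variable (S : NumSurface V)

/-- The Hodge index inequality `x² · K² ≤ (x.K)²`. -/
theorem inter_self_mul_le_sq (hK2 : 0 < S.inter S.K S.K)
    (hodge : ∀ D : V, S.inter D S.K = 0 → S.inter D D ≤ 0) (x : V) :
    S.inter x x * S.inter S.K S.K ≤ S.inter x S.K ^ 2 := by
  have hKx : S.inter S.K x = S.inter x S.K := S.inter_symm _ _
  -- `D` is the projection of `K² • x` to the orthogonal complement of `K`.
  set D := S.inter S.K S.K • x - S.inter x S.K • S.K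
  have hDK : S.inter D S.K = 0 := by
    simp only [D, map_sub, map_smul, LinearMap.sub_apply, LinearMap.smul_apply, smul_eq_mul]
    ring
  have hDD : S.inter D D =
      S.inter S.K S.K * (S.inter x x * S.inter S.K S.K - S.inter x S.K ^ 2) := by
    simp only [D, map_sub, map_smul, LinearMap.sub_apply, LinearMap.smul_apply, smul_eq_mul, hKx]
    ring
  have := hodge D hDK
  rw [hDD] at this
  linarith [nonpos_of_mul_nonpos_right this hK2]

theorem inter_sub_K_nonpos (hK2 : 0 < S.inter S.K S.K)
    (hodge : ∀ D : V, S.inter D S.K = 0 → S.inter D D ≤ 0) {x : V}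
    (h0 : 0 ≤ S.inter x S.K) (h1 : S.inter x S.K ≤ S.inter S.K S.K) :
    S.inter x (x - S.K) ≤ 0 := by
  have hxx : S.inter x x * S.inter S.K S.K ≤ S.inter x S.K * S.inter S.K S.K :=
    calc S.inter x x * S.inter S.K S.K ≤ S.inter x S.K ^ 2 := S.inter_self_mul_le_sq hK2 hodge x
      _ ≤ S.inter x S.K * S.inter S.K S.K := by rw [sq]; exact mul_le_mul_of_nonneg_left h1 h0
  simpa only [map_sub, sub_nonpos] using le_of_mul_le_mul_right hxx hK2

end NumSurface

namespace CharQ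

variable (S : NumSurface V)

theorem P_le_chiO (hK2 : 0 < S.inter S.K S.K)
    (hodge : ∀ D : V, S.inter D S.K = 0 → S.inter D D ≤ 0) {x : V}
    (h0 : 0 ≤ S.inter x S.K) (h1 : S.inter x S.K ≤ S.inter S.K S.K) :
    P S x ≤ S.chiO := by
  have := S.inter_sub_K_nonpos hK2 hodge h0 h1
  unfold P
  linarith

theorem inter_nu_sub_nu_K (v w : CharQ V) :
    S.inter (nu w - nu v) S.K = mu S v - mu S w := by
  simp only [mu, map_sub, map_neg, LinearMap.sub_apply]
  ring

theorem chiPair_nonpos {v w : CharQ V} (hv : 0 < v.r) (hw : 0 < w.r)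
    (hP : P S (nu w - nu v) ≤ Delta S v + Delta S w) : chiPair S v w ≤ 0 :=
  mul_nonpos_of_nonneg_of_nonpos (mul_pos hv hw).le (by linarith)

end CharQ

open CharQ in
theorem dl_condition_of_discriminant_ge_one_general
    (S : NumSurface V) (hchiO : S.chiO = 1)
    (hK2 : 0 < S.inter S.K S.K)
    (hodge : ∀ D : V, S.inter D S.K = 0 → S.inter D D ≤ 0)
    (v E : CharQ V) (hv : 0 < v.r) (hEr : 0 < E.r)
    (hΔE : 0 ≤ Delta S E) (hΔv : 1 ≤ Delta S v) :
    (mu S v ≤ mu S E → mu S E ≤ mu S v + S.inter S.K S.K →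
      chiPair S E v ≤ 0) ∧
    (mu S v - S.inter S.K S.K ≤ mu S E → mu S E ≤ mu S v →
      chiPair S v E ≤ 0) := by
  have hEv := inter_nu_sub_nu_K S E v
  have hvE := inter_nu_sub_nu_K S v E
  constructor
  · intro hlo hhi
    have := P_le_chiO S hK2 hodge (x := nu v - nu E) (by linarith) (by linarith)
    exact chiPair_nonpos S hEr hv (by linarith)
  · intro hlo hhi
    have := P_le_chiO S hK2 hodge (x := nu E - nu v) (by linarith) (by linarith)
    exact chiPair_nonpos S hv hEr (by linarith)

open CharQ in
/-- On a del Pezzo surface `X_m` (`m ≤ 6`, `χ(O) = 1`, `K² = 9 − m > 0`, the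
Hodge index theorem holds for the ample class `−K`), let `v` be a Chern
character of positive rank with `Δ(v) ≥ 1`.  Then `v` satisfies the
Drézet–Le Potier condition: for every exceptional bundle `E` (which has
`Δ(E) ≥ 0`) with `r(E) < r(v)` and `μ(v) ≤ μ(E) ≤ μ(v) + K²`, one has
`χ(E, v) ≤ 0`; and dually, if `μ(v) − K² ≤ μ(E) ≤ μ(v)` then
`χ(v, E) ≤ 0`. -/
theorem dl_condition_of_discriminant_ge_one
    (S : NumSurface V) (hchiO : S.chiO = 1)
    (hK2 : 0 < S.inter S.K S.K)
    (hodge : ∀ D : V, S.inter D S.K = 0 → S.inter D D ≤ 0)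
    (v E : CharQ V) (hv : 0 < v.r) (hEr : 0 < E.r) (hrlt : E.r < v.r)
    (hΔE : 0 ≤ Delta S E) (hΔv : 1 ≤ Delta S v) :
    (mu S v ≤ mu S E → mu S E ≤ mu S v + S.inter S.K S.K →
      chiPair S E v ≤ 0) ∧
    (mu S v - S.inter S.K S.K ≤ mu S E → mu S E ≤ mu S v →
      chiPair S v E ≤ 0) :=
  dl_condition_of_discriminant_ge_one_general S hchiO hK2 hodge v E hv hEr hΔE hΔv
end
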